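/- arXiv:2302.00091 — 3 statements merged into one kernel-verified Lean document; each statement's English description precedes it below -/
import Mathlib

section
/- For all positive reals a and b, (√a − √b)(ln a − ln b) ≥ 4(a^{1/4} − b^{1/4})². -/
lemma aux_stmt1 (a b : ℝ) (ha : 0 < a) (hb : 0 < b) (hab : b ≤ a) :
    4 * (a ^ ((1 : ℝ) / 4) - b ^ ((1 : ℝ) / 4)) ^ 2 ≤
      (Real.sqrt a - Real.sqrt b) * (Real.log a - Real.log b) := by
  set x := a ^ ((1 : ℝ) / 4) with hxdef
  set y := b ^ ((1 : ℝ) / 4) with hydef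
  have hx : 0 < x := Real.rpow_pos_of_pos ha _
  have hy : 0 < y := Real.rpow_pos_of_pos hb _
  have hxy : y ≤ x := Real.rpow_le_rpow hb.le hab (by norm_num)
  have hsa : Real.sqrt a = x ^ 2 := by
    rw [hxdef, ← Real.rpow_natCast (a ^ ((1:ℝ)/4)) 2, ← Real.rpow_mul ha.le]
    rw [Real.sqrt_eq_rpow]; norm_num
  have hsb : Real.sqrt b = y ^ 2 := by
    rw [hydef, ← Real.rpow_natCast (b ^ ((1:ℝ)/4)) 2, ← Real.rpow_mul hb.le]
    rw [Real.sqrt_eq_rpow]; norm_num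
  have hla : Real.log a = 4 * Real.log x := by
    rw [hxdef, Real.log_rpow ha]; ring
  have hlb : Real.log b = 4 * Real.log y := by
    rw [hydef, Real.log_rpow hb]; ring
  rw [hsa, hsb, hla, hlb]
  have h1 : Real.log y - Real.log x ≤ y / x - 1 := by
    have := Real.log_le_sub_one_of_pos (div_pos hy hx)
    rwa [Real.log_div hy.ne' hx.ne'] at this
  have h2 : x - y ≤ x * (Real.log x - Real.log y) := by
    have := mul_le_mul_of_nonneg_left h1 hx.le
    have hxx : x * (y / x - 1) = y - x := by field_simp
    nlinarith
  nlinarith [mul_nonneg (sub_nonneg.2 hxy) (sub_nonneg.2 hxy),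
    mul_le_mul_of_nonneg_left h2 (sub_nonneg.2 hxy), hy.le, hx.le]

theorem stmt_1 (a b : ℝ) (ha : 0 < a) (hb : 0 < b) :
    4 * (a ^ ((1 : ℝ) / 4) - b ^ ((1 : ℝ) / 4)) ^ 2 ≤
      (Real.sqrt a - Real.sqrt b) * (Real.log a - Real.log b) := by
  rcases le_total b a with h | h
  · exact aux_stmt1 a b ha hb h
  · have H := aux_stmt1 b a hb ha h
    have e1 : 4 * (a ^ ((1 : ℝ) / 4) - b ^ ((1 : ℝ) / 4)) ^ 2
        = 4 * (b ^ ((1 : ℝ) / 4) - a ^ ((1 : ℝ) / 4)) ^ 2 := by ring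
    have e2 : (Real.sqrt a - Real.sqrt b) * (Real.log a - Real.log b)
        = (Real.sqrt b - Real.sqrt a) * (Real.log b - Real.log a) := by ring
    rw [e1, e2]; exact H
end

section
/- For 1 < p ≤ 2 and all x, y ∈ ℝ^N, (1 + |x|² + |y|²)^{(2−p)/2} · ((|x|^{p−2}x − |y|^{p−2}y) · (x − y)) ≥ (p − 1)|x − y|². -/
/-!
Write `a = ‖x‖`, `b = ‖y‖`, `t = ⟪x, y⟫` and `M = (1 + a² + b²) ^ ((2 - p) / 2)`. Both sides are
affine in `t ∈ [-ab, ab]`, so it suffices to check the two endpoints. Since `c² ≤ 1 + a² + b²` and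
`p ≤ 2`, we have `1 ≤ M c ^ (p - 2)` for `c ∈ {a, b}`. At `t = -ab` this alone gives the claim, as
`p - 1 ≤ 1`. At `t = ab` the claim is `(p - 1)(a - b)² ≤ M (a ^ (p - 1) - b ^ (p - 1))(a - b)`, which
follows from the tangent line bound for the concave function `c ↦ c ^ (p - 1)` at the larger of
`a` and `b`.
-/

open Real

theorem mul_rpow_sub_one_mul_sub_le_rpow_sub_rpow {q a b : ℝ} (hq0 : 0 ≤ q) (hq1 : q ≤ 1)
    (ha : 0 < a) (hb : 0 ≤ b) : q * a ^ (q - 1) * (a - b) ≤ a ^ q - b ^ q := by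
  have hbernoulli : (b / a) ^ q ≤ 1 + q * (b / a - 1) := by
    simpa using rpow_one_add_le_one_add_mul_self (s := b / a - 1)
      (by linarith [div_nonneg hb ha.le]) hq0 hq1
  have hself : a ^ q = a ^ (q - 1) * a := by
    rw [rpow_sub_one ha.ne', div_mul_cancel₀ _ ha.ne']
  have hpos : 0 < a ^ q := rpow_pos_of_pos ha q
  have : b ^ q ≤ a ^ q + q * a ^ (q - 1) * (b - a) :=
    calc b ^ q = (b / a) ^ q * a ^ q := by rw [div_rpow hb ha.le, div_mul_cancel₀ _ hpos.ne']
      _ ≤ (1 + q * (b / a - 1)) * a ^ q := by gcongr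
      _ = a ^ q + q * a ^ (q - 1) * (b - a) := by rw [hself]; field_simp
  linarith

theorem rpow_sub_two_mul_self {p c : ℝ} (hp : 1 < p) (hc : 0 ≤ c) :
    c ^ (p - 2) * c = c ^ (p - 1) := by
  rcases hc.eq_or_lt with rfl | hc
  · rw [mul_zero, zero_rpow (by linarith)]
  · rw [← rpow_add_one hc.ne']
    ring_nf

section

variable {p a b T : ℝ}

theorem one_le_rpow_mul_rpow_sub_two (hp2 : p ≤ 2) (ha : 0 < a) (haT : a ^ 2 ≤ T) :
    1 ≤ T ^ ((2 - p) / 2) * a ^ (p - 2) :=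
  calc (1 : ℝ) = (a ^ 2) ^ ((2 - p) / 2) * a ^ (p - 2) := by
        rw [← rpow_natCast_mul ha.le, ← rpow_add ha]
        ring_nf
        exact (rpow_zero a).symm
    _ ≤ T ^ ((2 - p) / 2) * a ^ (p - 2) := by gcongr

theorem le_rpow_mul_rpow_sub_two_mul_self (hp2 : p ≤ 2) (ha : 0 ≤ a) (haT : a ^ 2 ≤ T) :
    a ≤ T ^ ((2 - p) / 2) * (a ^ (p - 2) * a) := by
  rcases ha.eq_or_lt with rfl | ha
  · simp
  · calc a ≤ T ^ ((2 - p) / 2) * a ^ (p - 2) * a :=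
          le_mul_of_one_le_left ha.le (one_le_rpow_mul_rpow_sub_two hp2 ha haT)
      _ = T ^ ((2 - p) / 2) * (a ^ (p - 2) * a) := mul_assoc _ _ _

theorem sub_one_mul_add_sq_le (hp2 : p ≤ 2) (ha : 0 ≤ a) (hb : 0 ≤ b)
    (haT : a ^ 2 ≤ T) (hbT : b ^ 2 ≤ T) :
    (p - 1) * (a + b) ^ 2 ≤
      T ^ ((2 - p) / 2) * ((a ^ (p - 2) * a + b ^ (p - 2) * b) * (a + b)) :=
  calc (p - 1) * (a + b) ^ 2 ≤ (a + b) * (a + b) := by nlinarith [sq_nonneg (a + b)]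
    _ ≤ (T ^ ((2 - p) / 2) * (a ^ (p - 2) * a) + T ^ ((2 - p) / 2) * (b ^ (p - 2) * b)) *
          (a + b) := by
        gcongr
        · exact le_rpow_mul_rpow_sub_two_mul_self hp2 ha haT
        · exact le_rpow_mul_rpow_sub_two_mul_self hp2 hb hbT
    _ = _ := by ring

theorem sub_one_mul_sub_sq_le_of_le (hp : 1 < p) (hp2 : p ≤ 2) (hb : 0 ≤ b) (hba : b ≤ a)
    (haT : a ^ 2 ≤ T) :
    (p - 1) * (a - b) ^ 2 ≤
      T ^ ((2 - p) / 2) * ((a ^ (p - 2) * a - b ^ (p - 2) * b) * (a - b)) := by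
  rcases hba.eq_or_lt with rfl | hba
  · simp
  have ha : 0 < a := hb.trans_lt hba
  have htangent : (p - 1) * a ^ (p - 2) * (a - b) ≤ a ^ (p - 1) - b ^ (p - 1) := by
    simpa [sub_sub, one_add_one_eq_two] using
      mul_rpow_sub_one_mul_sub_le_rpow_sub_rpow (q := p - 1) (by linarith) (by linarith) ha hb
  rw [rpow_sub_two_mul_self hp ha.le, rpow_sub_two_mul_self hp hb]
  calc (p - 1) * (a - b) ^ 2 ≤ (T ^ ((2 - p) / 2) * a ^ (p - 2)) * ((p - 1) * (a - b) ^ 2) := by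
        apply le_mul_of_one_le_left (by nlinarith [sq_nonneg (a - b)])
        exact one_le_rpow_mul_rpow_sub_two hp2 ha haT
    _ = T ^ ((2 - p) / 2) * ((p - 1) * a ^ (p - 2) * (a - b) * (a - b)) := by ring
    _ ≤ T ^ ((2 - p) / 2) * ((a ^ (p - 1) - b ^ (p - 1)) * (a - b)) := by
        have := rpow_nonneg ((sq_nonneg a).trans haT) ((2 - p) / 2)
        gcongr

theorem sub_one_mul_sub_sq_le (hp : 1 < p) (hp2 : p ≤ 2) (ha : 0 ≤ a) (hb : 0 ≤ b)
    (haT : a ^ 2 ≤ T) (hbT : b ^ 2 ≤ T) :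
    (p - 1) * (a - b) ^ 2 ≤
      T ^ ((2 - p) / 2) * ((a ^ (p - 2) * a - b ^ (p - 2) * b) * (a - b)) := by
  rcases le_total b a with hba | hab
  · exact sub_one_mul_sub_sq_le_of_le hp hp2 hb hba haT
  · have := sub_one_mul_sub_sq_le_of_le hp hp2 ha hab hbT
    linarith

theorem sub_one_mul_le_rpow_mul_of_abs_le (hp : 1 < p) (hp2 : p ≤ 2) (ha : 0 ≤ a) (hb : 0 ≤ b)
    (haT : a ^ 2 ≤ T) (hbT : b ^ 2 ≤ T) {t : ℝ} (ht : |t| ≤ a * b) :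
    (p - 1) * (a ^ 2 - 2 * t + b ^ 2) ≤
      T ^ ((2 - p) / 2) * (a ^ (p - 2) * a ^ 2 - a ^ (p - 2) * t - b ^ (p - 2) * t +
        b ^ (p - 2) * b ^ 2) := by
  obtain ⟨hlow, hupp⟩ := abs_le.mp ht
  have hopp := sub_one_mul_add_sq_le hp2 ha hb haT hbT
  have hali := sub_one_mul_sub_sq_le hp hp2 ha hb haT hbT
  rcases le_total (2 * (p - 1)) (T ^ ((2 - p) / 2) * (a ^ (p - 2) + b ^ (p - 2))) with hd | hd
  · nlinarith [mul_le_mul_of_nonneg_right hd (by linarith : 0 ≤ a * b - t)]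
  · nlinarith [mul_le_mul_of_nonneg_right hd (by linarith : 0 ≤ t + a * b)]

end

theorem stmt_3 (N : ℕ) (p : ℝ) (hp : 1 < p) (hp2 : p ≤ 2)
    (x y : EuclideanSpace ℝ (Fin N)) :
    (p - 1) * ‖x - y‖ ^ 2 ≤
      (1 + ‖x‖ ^ 2 + ‖y‖ ^ 2) ^ ((2 - p) / 2) *
        (inner ℝ ((‖x‖ ^ (p - 2)) • x - (‖y‖ ^ (p - 2)) • y) (x - y) : ℝ) := by
  have key := sub_one_mul_le_rpow_mul_of_abs_le (T := 1 + ‖x‖ ^ 2 + ‖y‖ ^ 2) hp hp2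
    (norm_nonneg x) (norm_nonneg y) (by nlinarith [sq_nonneg ‖y‖]) (by nlinarith [sq_nonneg ‖x‖])
    (abs_real_inner_le_norm x y)
  rw [norm_sub_sq_real, inner_sub_left, inner_sub_right, inner_sub_right, real_inner_smul_left,
    real_inner_smul_left, real_inner_smul_left, real_inner_smul_left,
    real_inner_self_eq_norm_sq, real_inner_self_eq_norm_sq, real_inner_comm x y]
  linarith
end

section
/- Let Ω be a measure space with finite measure, ρ ≥ 0 measurable with ∫ ln(ρ)(ρ − 1) dμ ≤ C₁ ∫|ρ − 1| dμ + C₂ for positive constants C₁, C₂. Then there exists a constant c depending only on C₁, C₂ and μ(Ω) such that ∫ |ρ − 1| dμ ≤ c. -/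
/-!
Split according to whether `ρ` exceeds `M = exp (2 C₁)`. Where `ρ > M` one has `ln ρ ≥ 2 C₁`, so
`2 C₁ |ρ - 1| ≤ ln ρ (ρ - 1)`; where `ρ ≤ M`, simply `|ρ - 1| ≤ M + 1`, and `ln ρ (ρ - 1) ≥ 0`
everywhere. Integrating, `2 C₁ ∫ |ρ - 1| ≤ ∫ ln ρ (ρ - 1) + 2 C₁ (M + 1) μ(Ω)`, and the hypothesis
absorbs half of the left-hand side.
-/

open MeasureTheory Real

lemma Real.log_mul_sub_one_nonneg {t : ℝ} (ht : 0 ≤ t) : 0 ≤ log t * (t - 1) := by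
  rcases le_or_gt 1 t with h | h
  · exact mul_nonneg (log_nonneg h) (by linarith)
  · exact mul_nonneg_of_nonpos_of_nonpos (log_nonpos ht h.le) (by linarith)

lemma Real.mul_abs_sub_one_le_log_mul_sub_one_add {K t : ℝ} (hK : 0 ≤ K) (ht : 0 ≤ t) :
    K * |t - 1| ≤ log t * (t - 1) + K * (exp K + 1) := by
  have hlog := log_mul_sub_one_nonneg ht
  rcases le_or_gt t (exp K) with h | h
  · have habs : |t - 1| ≤ exp K + 1 := abs_le.mpr ⟨by linarith [exp_pos K], by linarith⟩
    nlinarith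
  · have ht1 : 1 < t := (one_le_exp hK).trans_lt h
    have hKlog : K ≤ log t := (lt_log_iff_exp_lt (by linarith)).mpr h |>.le
    have hmain : K * (t - 1) ≤ log t * (t - 1) := by gcongr
    rw [abs_of_pos (by linarith)]
    nlinarith [exp_pos K]

lemma MeasureTheory.mul_integral_abs_sub_one_le {Ω : Type*} [MeasurableSpace Ω] {μ : Measure Ω}
    [IsFiniteMeasure μ] {ρ : Ω → ℝ} {K : ℝ} (hK : 0 ≤ K) (hρ : ∀ x, 0 ≤ ρ x)
    (h_abs : Integrable (fun x => |ρ x - 1|) μ)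
    (h_log : Integrable (fun x => log (ρ x) * (ρ x - 1)) μ) :
    K * ∫ x, |ρ x - 1| ∂μ ≤
      ∫ x, log (ρ x) * (ρ x - 1) ∂μ + K * (exp K + 1) * μ.real Set.univ := by
  calc K * ∫ x, |ρ x - 1| ∂μ = ∫ x, K * |ρ x - 1| ∂μ := (integral_const_mul K _).symm
    _ ≤ ∫ x, (log (ρ x) * (ρ x - 1) + K * (exp K + 1)) ∂μ :=
        integral_mono (h_abs.const_mul K) (h_log.add (integrable_const _))
          fun x => mul_abs_sub_one_le_log_mul_sub_one_add hK (hρ x)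
    _ = ∫ x, log (ρ x) * (ρ x - 1) ∂μ + K * (exp K + 1) * μ.real Set.univ := by
        rw [integral_add h_log (integrable_const _), integral_const, smul_eq_mul, mul_comm]

theorem stmt_7 :
    ∃ c : ℝ → ℝ → ℝ → ℝ,
      ∀ (Ω : Type) (_ : MeasurableSpace Ω) (μ : Measure Ω), IsFiniteMeasure μ →
        ∀ (ρ : Ω → ℝ) (C₁ C₂ : ℝ), 0 < C₁ → 0 < C₂ →
          Measurable ρ → (∀ x, 0 ≤ ρ x) →
          Integrable (fun x => |ρ x - 1|) μ →
          Integrable (fun x => Real.log (ρ x) * (ρ x - 1)) μ →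
          (∫ x, Real.log (ρ x) * (ρ x - 1) ∂μ ≤
            C₁ * ∫ x, |ρ x - 1| ∂μ + C₂) →
          ∫ x, |ρ x - 1| ∂μ ≤ c C₁ C₂ (μ Set.univ).toReal := by
  refine ⟨fun C₁ C₂ V => C₂ / C₁ + 2 * (exp (2 * C₁) + 1) * V, ?_⟩
  intro Ω _ μ _ ρ C₁ C₂ hC₁ _ _ hρ h_abs h_log h_hyp
  have h_split := mul_integral_abs_sub_one_le (μ := μ) (by positivity : 0 ≤ 2 * C₁) hρ h_abs h_log
  rw [measureReal_def] at h_split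
  show _ ≤ C₂ / C₁ + _
  rw [div_add' _ _ _ hC₁.ne', le_div_iff₀ hC₁]
  linarith
end
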